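/- arXiv:1801.10608 — 2 statements merged into one kernel-verified Lean document; each statement's English description precedes it below -/
import Mathlib

section
/- Let n ≥ 1. The assignment [k_n, k_{n−1}, …, k_1] ↦ O_w, where w = c_{k_n,n} c_{k_{n−1},n−1} ⋯ c_{k_1,1}, is a bijection from the set of admissible sequences of nonnegative integers of length n onto the set of double cosets {O_σ : σ ∈ S_{2n}} of the subgroup S in S_{2n}. -/
/-- The subgroup `S ⊆ S_{2n}` of permutations fixing each of the last `n` points
(`n+1, …, 2n` in one-based terms, i.e. the indices `i` with `n ≤ i` in zero-based terms). -/
def Sfix (n : ℕ) : Set (Equiv.Perm (Fin (2 * n))) :=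
  {g | ∀ i : Fin (2 * n), n ≤ (i : ℕ) → g i = i}

/-- The double coset `O_σ = {g σ h : g, h ∈ S}`. -/
def dcoset (n : ℕ) (σ : Equiv.Perm (Fin (2 * n))) : Set (Equiv.Perm (Fin (2 * n))) :=
  {t | ∃ g ∈ Sfix n, ∃ h ∈ Sfix n, t = g * σ * h}

/-- The length of a permutation: its number of inversions. -/
noncomputable def len (n : ℕ) (σ : Equiv.Perm (Fin (2 * n))) : ℕ :=
  {p : Fin (2 * n) × Fin (2 * n) | p.1 < p.2 ∧ σ p.2 < σ p.1}.ncard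

/-- The adjacent transposition `s_i = (i, i+1)` of `{1, …, m}` (one-based), i.e. the swap
of the zero-based positions `i-1` and `i`; it is the identity for out-of-range `i`. -/
def sTrans (m i : ℕ) : Equiv.Perm (Fin m) :=
  if h : 1 ≤ i ∧ i < m then
    Equiv.swap ⟨i - 1, by omega⟩ ⟨i, h.2⟩
  else 1

/-- The cycle `c_{k,j} = s_{j+n-k} s_{j+n-k+1} ⋯ s_{j+n-1} ∈ S_{2n}` (with `c_{0,j} = e`). -/
def cyc (n k j : ℕ) : Equiv.Perm (Fin (2 * n)) :=
  ((List.range k).map fun t => sTrans (2 * n) (j + n - k + t)).prod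

/-- The product `c_{k_n,n} c_{k_{n-1},n-1} ⋯ c_{k_1,1} ∈ S_{2n}` associated to a sequence
`[k_n, …, k_1]` (encoded as a function `k : ℕ → ℕ` on the indices `1, …, n`). -/
def cycProd (n : ℕ) (k : ℕ → ℕ) : Equiv.Perm (Fin (2 * n)) :=
  ((List.range n).map fun t => cyc n (k (n - t)) (n - t)).prod

/-- The bound `max (max_{j < i ≤ n} (k_i + j + 1 - i)) j` appearing in admissibility. -/
def admBound (n : ℕ) (k : ℕ → ℕ) (j : ℕ) : ℕ :=
  max ((Finset.Ioc j n).sup fun i => k i + j + 1 - i) j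

/-- A sequence `[k_n, …, k_1]` of nonnegative integers is admissible if
`k_j ≤ max (max_{j < i ≤ n} (k_i + j + 1 - i)) j` for every `1 ≤ j ≤ n`. -/
def Admissible (n : ℕ) (k : ℕ → ℕ) : Prop :=
  ∀ j, 1 ≤ j → j ≤ n → k j ≤ admBound n k j


/-!
A double coset `S σ S` is determined by where `σ` sends each of the last `n` points, forgetting
which of the first `n` points is hit (`dcoset_eq_dcoset_iff`). For `w = c_{k_n,n} ⋯ c_{k_1,1}`
the (zero-based) point `n + j - 1` is fixed by the factors `c_{k_i,i}` with `i < j`, sent to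
`n + j - 1 - k_j` by `c_{k_j,j}`, and then moved by the head `c_{k_n,n} ⋯ c_{k_{j+1},j+1}`, which
only depends on the `k_i` with `i > j`. For admissible `k` this head sends exactly the top
`admBound n k j` points below `n + j` to the last `n` points. Hence `w (n + j - 1)` lies among the
first `n` points iff `k_j = admBound n k j`, and otherwise `k_j < admBound n k j` runs bijectively
over the values among the last `n` points not yet taken at the positions above `n + j - 1`.
Choosing `k_n, k_{n-1}, …, k_1` in turn thus yields exactly one admissible sequence per double
coset.
-/

open Equiv

lemma sTrans_apply_val {m i : ℕ} (h1 : 1 ≤ i) (h2 : i < m) (x : Fin m) :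
    (sTrans m i x : ℕ) = if (x : ℕ) = i - 1 then i else if (x : ℕ) = i then i - 1 else x := by
  simp only [sTrans, dif_pos (And.intro h1 h2), swap_apply_def]
  split_ifs <;> simp only [Fin.ext_iff] at * <;> omega

lemma cyc_succ {n k j : ℕ} (h : k < j + n) :
    cyc n (k + 1) j = sTrans (2 * n) (j + n - (k + 1)) * cyc n k j := by
  rw [cyc, List.range_succ_eq_map, List.map_cons, List.prod_cons, List.map_map, cyc]
  congr 2
  refine List.map_congr_left fun t _ => ?_
  simp only [Function.comp_apply]
  congr 1
  omega

lemma cyc_apply_val {n k j : ℕ} (hj : j ≤ n) (hk : k < j + n) (x : Fin (2 * n)) :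
    (cyc n k j x : ℕ) =
      if (x : ℕ) = j + n - 1 then j + n - 1 - k
      else if j + n - 1 - k ≤ x ∧ (x : ℕ) < j + n - 1 then x + 1 else x := by
  induction k with
  | zero =>
    simp only [cyc, List.range_zero, List.map_nil, List.prod_nil, Perm.one_apply]
    split_ifs <;> omega
  | succ k ih =>
    rw [cyc_succ (by omega : k < j + n), Perm.mul_apply, sTrans_apply_val (by omega) (by omega),
      ih (by omega)]
    split_ifs <;> omega

/-- The head `c_{k_n,n} ⋯ c_{k_{j+1},j+1}` of the product `cycProd n k`. -/
def cycProdFrom (n : ℕ) (k : ℕ → ℕ) (j : ℕ) : Perm (Fin (2 * n)) :=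
  ((List.range (n - j)).map fun t => cyc n (k (n - t)) (n - t)).prod

lemma cycProdFrom_self (n : ℕ) (k : ℕ → ℕ) : cycProdFrom n k n = 1 := by
  simp [cycProdFrom]

lemma cycProdFrom_eq_mul {n j : ℕ} (k : ℕ → ℕ) (hj : j < n) :
    cycProdFrom n k j = cycProdFrom n k (j + 1) * cyc n (k (j + 1)) (j + 1) := by
  obtain ⟨d, hd⟩ : ∃ d, n - j = d + 1 := ⟨n - j - 1, by omega⟩
  rw [cycProdFrom, hd, List.range_succ, List.map_append, List.prod_append, cycProdFrom,
    show n - (j + 1) = d by omega, List.map_singleton, List.prod_singleton,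
    show n - d = j + 1 by omega]

lemma cycProdFrom_congr {n j : ℕ} {k k' : ℕ → ℕ} (h : ∀ i, j < i → i ≤ n → k i = k' i) :
    cycProdFrom n k j = cycProdFrom n k' j := by
  unfold cycProdFrom
  congr 1
  refine List.map_congr_left fun t ht => ?_
  rw [List.mem_range] at ht
  rw [h (n - t) (by omega) (by omega)]

lemma cycProdFrom_apply_of_le {n i j : ℕ} {k : ℕ → ℕ} (hk : ∀ l, 1 ≤ l → l ≤ n → k l ≤ n)
    (hij : i ≤ j) (hjn : j ≤ n) {x : Fin (2 * n)} (hx : n + j ≤ x) :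
    cycProdFrom n k i x = cycProdFrom n k j x := by
  induction hij using Nat.decreasingInduction with
  | self => rfl
  | of_succ i hi ih =>
    rw [cycProdFrom_eq_mul k (by omega), Perm.mul_apply, ← ih]
    congr 1
    ext
    rw [cyc_apply_val (by omega) (by linarith [hk (i + 1) (by omega) (by omega)])]
    split_ifs <;> omega

lemma cycProd_apply_of_le {n j : ℕ} {k : ℕ → ℕ} (hk : ∀ l, 1 ≤ l → l ≤ n → k l ≤ n)
    (hjn : j ≤ n) {x : Fin (2 * n)} (hx : n + j ≤ x) :
    cycProd n k x = cycProdFrom n k j x :=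
  cycProdFrom_apply_of_le hk (Nat.zero_le j) hjn hx

lemma cycProd_apply_high {n j : ℕ} {k : ℕ → ℕ} (hk : ∀ l, 1 ≤ l → l ≤ n → k l ≤ n)
    (hj : 1 ≤ j) (hjn : j ≤ n) (p : Fin (2 * n)) (hp : (p : ℕ) = n + j - 1) :
    cycProd n k p = cycProdFrom n k j ⟨n + j - 1 - k j, by omega⟩ := by
  rw [cycProd_apply_of_le hk (by omega : j - 1 ≤ n) (by omega),
    cycProdFrom_eq_mul k (by omega : j - 1 < n), Perm.mul_apply, Nat.sub_add_cancel hj]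
  congr 1
  ext
  rw [cyc_apply_val hjn (by linarith [hk j hj hjn]), if_pos (by omega), Fin.val_mk]
  omega

lemma admBound_self (n : ℕ) (k : ℕ → ℕ) : admBound n k n = n := by
  simp [admBound]

lemma le_admBound (n : ℕ) (k : ℕ → ℕ) (j : ℕ) : j ≤ admBound n k j :=
  le_max_right _ _

lemma admBound_eq_max {n j : ℕ} (k : ℕ → ℕ) (hj : j < n) :
    admBound n k j = max (admBound n k (j + 1) - 1) (k (j + 1)) := by
  have hIoc : Finset.Ioc j n = insert (j + 1) (Finset.Ioc (j + 1) n) := by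
    ext i; simp only [Finset.mem_Ioc, Finset.mem_insert]; omega
  have hsup : ((Finset.Ioc (j + 1) n).sup fun i => k i + j + 1 - i)
      = ((Finset.Ioc (j + 1) n).sup fun i => k i + (j + 1) + 1 - i) - 1 := by
    rw [Finset.apply_sup_eq_sup_comp_of_linearOrder (· - 1)
      (fun _ _ h => Nat.sub_le_sub_right h 1) rfl]
    exact Finset.sup_congr rfl fun i _ => by simp only [Function.comp_apply]; omega
  rw [admBound, hIoc, Finset.sup_insert, hsup, admBound]
  omega

lemma admBound_congr {n j : ℕ} {k k' : ℕ → ℕ} (h : ∀ i, j < i → i ≤ n → k i = k' i) :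
    admBound n k j = admBound n k' j := by
  unfold admBound
  congr 1
  refine Finset.sup_congr rfl fun i hi => ?_
  rw [Finset.mem_Ioc] at hi
  rw [h i hi.1 hi.2]

lemma Admissible.admBound_le {n : ℕ} {k : ℕ → ℕ} (H : Admissible n k) {j : ℕ} (hj : j ≤ n) :
    admBound n k j ≤ n := by
  induction hj using Nat.decreasingInduction with
  | self => rw [admBound_self]
  | of_succ j hj ih =>
    rw [admBound_eq_max k hj]
    have := H (j + 1) (by omega) (by omega)
    omega

lemma Admissible.apply_le {n : ℕ} {k : ℕ → ℕ} (H : Admissible n k) :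
    ∀ j, 1 ≤ j → j ≤ n → k j ≤ n :=
  fun j h1 h2 => (H j h1 h2).trans (H.admBound_le h2)

/-- This is where `admBound` comes from: `admBound_eq_max` is the effect of the single factor
`c_{k_{j+1},j+1}` on the threshold. -/
lemma Admissible.cycProdFrom_lt_iff {n : ℕ} {k : ℕ → ℕ} (H : Admissible n k) {j : ℕ}
    (hj : j ≤ n) (x : Fin (2 * n)) (hx : (x : ℕ) < n + j) :
    (cycProdFrom n k j x : ℕ) < n ↔ x + admBound n k j < n + j := by
  induction hj using Nat.decreasingInduction generalizing x with
  | self => rw [cycProdFrom_self, admBound_self, Perm.one_apply]; omega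
  | of_succ j hj ih =>
    have hkj := H (j + 1) (by omega) (by omega)
    have hB := H.admBound_le (show j + 1 ≤ n by omega)
    have hB' := le_admBound n k (j + 1)
    have hc := cyc_apply_val (k := k (j + 1)) (show j + 1 ≤ n by omega) (by omega) x
    rw [cycProdFrom_eq_mul k hj, Perm.mul_apply, ih _ (by split_ifs at hc <;> omega),
      admBound_eq_max k hj, hc]
    split_ifs <;> omega

lemma Admissible.cycProd_lt_iff {n : ℕ} {k : ℕ → ℕ} (H : Admissible n k) {j : ℕ}
    (hj : 1 ≤ j) (hjn : j ≤ n) (p : Fin (2 * n)) (hp : (p : ℕ) = n + j - 1) :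
    (cycProd n k p : ℕ) < n ↔ k j = admBound n k j := by
  rw [cycProd_apply_high H.apply_le hj hjn p hp,
    H.cycProdFrom_lt_iff hjn _ (by simp only; omega)]
  have := H j hj hjn
  have := H.apply_le j hj hjn
  simp only
  omega

def SfixSubgroup (n : ℕ) : Subgroup (Perm (Fin (2 * n))) :=
  fixingSubgroup (Perm (Fin (2 * n))) {i : Fin (2 * n) | n ≤ (i : ℕ)}

lemma coe_SfixSubgroup (n : ℕ) : (SfixSubgroup n : Set (Perm (Fin (2 * n)))) = Sfix n := by
  ext g
  simp [SfixSubgroup, Sfix, mem_fixingSubgroup_iff]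

lemma dcoset_eq_doubleCoset (n : ℕ) (σ : Perm (Fin (2 * n))) :
    dcoset n σ = DoubleCoset.doubleCoset σ (SfixSubgroup n) (SfixSubgroup n) := by
  ext t
  rw [DoubleCoset.mem_doubleCoset, coe_SfixSubgroup]
  rfl

lemma dcoset_eq_dcoset_iff_mem {n : ℕ} {σ τ : Perm (Fin (2 * n))} :
    dcoset n σ = dcoset n τ ↔ τ ∈ dcoset n σ := by
  simp only [dcoset_eq_doubleCoset]
  exact ⟨fun h => h ▸ DoubleCoset.mem_doubleCoset_self _ _ τ,
    fun h => (DoubleCoset.doubleCoset_eq_of_mem h).symm⟩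

lemma apply_lt_of_mem_Sfix {n : ℕ} {g : Perm (Fin (2 * n))} (hg : g ∈ Sfix n) {x : Fin (2 * n)}
    (hx : (x : ℕ) < n) : (g x : ℕ) < n := by
  by_contra hgx
  have := g.injective (hg (g x) (by omega))
  omega

def HighAgree (n : ℕ) (σ τ : Perm (Fin (2 * n))) (p : Fin (2 * n)) : Prop :=
  (n ≤ (σ p : ℕ) ∨ n ≤ (τ p : ℕ)) → σ p = τ p

lemma exists_mem_Sfix_apply_eq {n : ℕ} {σ τ : Perm (Fin (2 * n))}
    (h : ∀ p : Fin (2 * n), n ≤ (p : ℕ) → HighAgree n σ τ p) :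
    ∃ g ∈ Sfix n, ∀ p : Fin (2 * n), n ≤ (p : ℕ) → g (σ p) = τ p := by
  let ι := {x : Fin (2 * n) // n ≤ (x : ℕ)} ⊕ {p : Fin (2 * n) // n ≤ (p : ℕ) ∧ (σ p : ℕ) < n}
  let src : ι → Fin (2 * n) := Sum.elim (↑) (fun p => σ p)
  let tgt : ι → Fin (2 * n) := Sum.elim (↑) (fun p => τ p)
  have hsrc : Function.Injective src := by
    refine Subtype.val_injective.sumElim (fun p q hpq => Subtype.ext (σ.injective hpq)) ?_
    rintro ⟨x, hx⟩ ⟨p, hp⟩ hxp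
    simp only at hxp
    omega
  have htgt : Function.Injective tgt := by
    refine Subtype.val_injective.sumElim (fun p q hpq => Subtype.ext (τ.injective hpq)) ?_
    rintro ⟨x, hx⟩ ⟨p, hp⟩ hxp
    have := h p hp.1 (Or.inr (by simp only at hxp; omega))
    simp only at hxp
    omega
  obtain ⟨g, hg⟩ := Perm.exists_extending_pair src tgt hsrc htgt
  have hfix : g ∈ Sfix n := fun x hx => hg (Sum.inl ⟨x, hx⟩)
  refine ⟨g, hfix, fun p hp => ?_⟩
  rcases le_or_gt n (σ p : ℕ) with hσp | hσp
  · rw [hfix _ hσp, h p hp (Or.inl hσp)]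
  · exact hg (Sum.inr ⟨p, hp, hσp⟩)

theorem dcoset_eq_dcoset_iff {n : ℕ} {σ τ : Perm (Fin (2 * n))} :
    dcoset n σ = dcoset n τ ↔ ∀ p : Fin (2 * n), n ≤ (p : ℕ) → HighAgree n σ τ p := by
  rw [dcoset_eq_dcoset_iff_mem]
  constructor
  · rintro ⟨g, hg, h, hh, rfl⟩ p hp hhigh
    simp only [Perm.mul_apply, hh p hp] at hhigh ⊢
    rcases le_or_gt n (σ p : ℕ) with hσp | hσp
    · rw [hg _ hσp]
    · have := apply_lt_of_mem_Sfix hg hσp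
      omega
  · intro h
    obtain ⟨g, hg, hgστ⟩ := exists_mem_Sfix_apply_eq h
    refine ⟨g, hg, σ⁻¹ * g⁻¹ * τ, fun p hp => ?_, by group⟩
    simp [← hgστ p hp]

lemma cycProd_apply_congr {n j : ℕ} {k k' : ℕ → ℕ} (hk : ∀ l, 1 ≤ l → l ≤ n → k l ≤ n)
    (hk' : ∀ l, 1 ≤ l → l ≤ n → k' l ≤ n) (h : ∀ i, j < i → i ≤ n → k i = k' i) (hjn : j ≤ n)
    {x : Fin (2 * n)} (hx : n + j ≤ x) :
    cycProd n k x = cycProd n k' x := by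
  rw [cycProd_apply_of_le hk hjn hx, cycProd_apply_of_le hk' hjn hx, cycProdFrom_congr h]

lemma Admissible.update {n j v : ℕ} {k : ℕ → ℕ} (H : Admissible n k) (hlow : ∀ i < j, k i = 0)
    (hv : v ≤ admBound n k j) : Admissible n (Function.update k j v) := by
  intro i hi hin
  rcases lt_trichotomy i j with hij | rfl | hji
  · simp [Function.update_of_ne hij.ne, hlow i hij]
  · rwa [Function.update_self, admBound_congr fun l hl _ => Function.update_of_ne hl.ne' _ _]
  · rw [Function.update_of_ne hji.ne', admBound_congr fun l hl _ => Function.update_of_ne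
      (hji.trans hl).ne' _ _]
    exact H i hi hin

/-- `cycProdFrom n k j` is a bijection that agrees with `cycProd n k` from `n + j` on, so every
value not taken there is hit below `n + j`. -/
lemma Admissible.exists_cycProdFrom_eq {n j : ℕ} {k : ℕ → ℕ} (H : Admissible n k) (hjn : j ≤ n)
    {v : Fin (2 * n)} (hv : n ≤ (v : ℕ))
    (hfree : ∀ q : Fin (2 * n), n + j ≤ q → cycProd n k q ≠ v) :
    ∃ x : Fin (2 * n), (x : ℕ) < n + j ∧ n + j ≤ x + admBound n k j ∧
      cycProdFrom n k j x = v := by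
  set x := (cycProdFrom n k j)⁻¹ v
  have hx : cycProdFrom n k j x = v := (cycProdFrom n k j).apply_symm_apply v
  have hxlt : (x : ℕ) < n + j := by
    by_contra! hle
    exact hfree x hle ((cycProd_apply_of_le H.apply_le hjn hle).trans hx)
  have := (H.cycProdFrom_lt_iff hjn x hxlt).not
  rw [hx] at this
  exact ⟨x, hxlt, by omega, hx⟩

lemma cycProd_update_apply_high {n j v : ℕ} {k : ℕ → ℕ} (hk : ∀ l, 1 ≤ l → l ≤ n → k l ≤ n)
    (hj : 1 ≤ j) (hjn : j ≤ n) (hv : v ≤ n) (p : Fin (2 * n)) (hp : (p : ℕ) = n + j - 1)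
    (x : Fin (2 * n)) (hx : (x : ℕ) + v = n + j - 1) :
    cycProd n (Function.update k j v) p = cycProdFrom n k j x := by
  have hk' : ∀ l, 1 ≤ l → l ≤ n → Function.update k j v l ≤ n := by
    intro l hl hln
    rcases eq_or_ne l j with rfl | hlj
    · rwa [Function.update_self]
    · rw [Function.update_of_ne hlj]
      exact hk l hl hln
  rw [cycProd_apply_high hk' hj hjn p hp,
    cycProdFrom_congr fun i hi _ => Function.update_of_ne hi.ne' _ _]
  congr 1
  ext
  simp only [Function.update_self]
  omega

lemma Admissible.exists_update_highAgree {n j : ℕ} {k : ℕ → ℕ} (H : Admissible n k)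
    (hlow : ∀ i < j, k i = 0) (hj : 1 ≤ j) (hjn : j ≤ n) (σ : Perm (Fin (2 * n)))
    (hagree : ∀ q : Fin (2 * n), n + j ≤ q → HighAgree n (cycProd n k) σ q)
    (p : Fin (2 * n)) (hp : (p : ℕ) = n + j - 1) :
    ∃ v ≤ admBound n k j, HighAgree n (cycProd n (Function.update k j v)) σ p := by
  have hB := H.admBound_le hjn
  rcases lt_or_ge (σ p : ℕ) n with hσ | hσ
  · refine ⟨admBound n k j, le_rfl, fun hhigh => ?_⟩
    have hkj : Function.update k j (admBound n k j) j =
        admBound n (Function.update k j (admBound n k j)) j := by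
      rw [Function.update_self]
      exact admBound_congr fun i hi _ => (Function.update_of_ne hi.ne' _ _).symm
    have := ((H.update hlow le_rfl).cycProd_lt_iff hj hjn p hp).2 hkj
    omega
  · have hfree : ∀ q : Fin (2 * n), n + j ≤ q → cycProd n k q ≠ σ p := by
      intro q hq hqσ
      have := congrArg Fin.val (σ.injective ((hagree q hq (Or.inl (hqσ ▸ hσ))).symm.trans hqσ))
      omega
    obtain ⟨x, hxlt, hxB, hx⟩ := H.exists_cycProdFrom_eq hjn hσ hfree
    refine ⟨n + j - 1 - x, by omega, fun _ => ?_⟩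
    rw [cycProd_update_apply_high H.apply_le hj hjn (by omega) p hp x (by omega), hx]

theorem exists_admissible_highAgree {n : ℕ} (σ : Perm (Fin (2 * n))) {d : ℕ} (hd : d ≤ n) :
    ∃ k : ℕ → ℕ, (∀ j, (j ≤ n - d ∨ n < j) → k j = 0) ∧ Admissible n k ∧
      ∀ p : Fin (2 * n), 2 * n - d ≤ p → HighAgree n (cycProd n k) σ p := by
  induction d with
  | zero => exact ⟨fun _ => 0, fun _ _ => rfl, fun _ _ _ => Nat.zero_le _, fun p hp => by omega⟩
  | succ d ih =>
    obtain ⟨k, hzero, H, hagree⟩ := ih (by omega)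
    obtain ⟨v, hvB, hv⟩ := H.exists_update_highAgree (j := n - d)
      (fun i hi => hzero i (by omega)) (by omega) (by omega) σ
      (fun q hq => hagree q (by omega)) ⟨2 * n - (d + 1), by omega⟩ (by simp only; omega)
    have H' := H.update (fun i hi => hzero i (by omega)) hvB
    refine ⟨Function.update k (n - d) v, fun i hi => ?_, H', fun p hp => ?_⟩
    · rw [Function.update_of_ne (by omega)]
      exact hzero i (by omega)
    · rcases (by omega : (p : ℕ) = 2 * n - (d + 1) ∨ 2 * n - d ≤ p) with hp | hp
      · rwa [show p = ⟨2 * n - (d + 1), by omega⟩ from Fin.ext hp]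
      · rw [HighAgree, cycProd_apply_congr H'.apply_le H.apply_le
          (fun i hi _ => Function.update_of_ne (by omega) _ _) (by omega : n - d ≤ n)
          (by omega)]
        exact hagree p hp

lemma Admissible.eq_of_highAgree {n m : ℕ} {k k' : ℕ → ℕ} (H : Admissible n k)
    (H' : Admissible n k') (hm : 1 ≤ m) (hmn : m ≤ n) (habove : ∀ i, m < i → i ≤ n → k i = k' i)
    (p : Fin (2 * n)) (hp : (p : ℕ) = n + m - 1)
    (hagree : HighAgree n (cycProd n k) (cycProd n k') p) :
    k m = k' m := by
  by_cases hhigh : n ≤ (cycProd n k p : ℕ) ∨ n ≤ (cycProd n k' p : ℕ)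
  · have heq := hagree hhigh
    rw [cycProd_apply_high H.apply_le hm hmn p hp, cycProd_apply_high H'.apply_le hm hmn p hp,
      cycProdFrom_congr habove] at heq
    have := Fin.mk.inj_iff.1 ((cycProdFrom n k' m).injective heq)
    have := H.apply_le m hm hmn
    have := H'.apply_le m hm hmn
    omega
  · rw [not_or, not_le, not_le] at hhigh
    rw [(H.cycProd_lt_iff hm hmn p hp).1 hhigh.1, (H'.cycProd_lt_iff hm hmn p hp).1 hhigh.2]
    exact admBound_congr habove

theorem Admissible.eq_of_dcoset_eq {n : ℕ} {k k' : ℕ → ℕ} (H : Admissible n k)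
    (H' : Admissible n k') (hk : ∀ j, (j = 0 ∨ n < j) → k j = 0)
    (hk' : ∀ j, (j = 0 ∨ n < j) → k' j = 0)
    (h : dcoset n (cycProd n k) = dcoset n (cycProd n k')) :
    k = k' := by
  have hagree := dcoset_eq_dcoset_iff.1 h
  have key : ∀ j ≤ n, ∀ i, j < i → i ≤ n → k i = k' i := by
    intro j hj
    induction hj using Nat.decreasingInduction with
    | self => intro i hi hin; omega
    | of_succ j hj ih =>
      intro i hi hin
      rcases (by omega : i = j + 1 ∨ j + 1 < i) with rfl | hi
      · exact H.eq_of_highAgree H' (by omega) hin ih ⟨n + j, by omega⟩ (by simp)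
          (hagree _ (by simp))
      · exact ih i hi hin
  funext i
  rcases (by omega : (i = 0 ∨ n < i) ∨ (0 < i ∧ i ≤ n)) with hi | hi
  · rw [hk i hi, hk' i hi]
  · exact key 0 (Nat.zero_le n) i hi.1 hi.2

theorem admissible_bijection_dcosets_general (n : ℕ) (σ : Equiv.Perm (Fin (2 * n))) :
    ∃! k : ℕ → ℕ, (∀ j, (j = 0 ∨ n < j) → k j = 0) ∧ Admissible n k ∧
      dcoset n (cycProd n k) = dcoset n σ := by
  obtain ⟨k, hzero, H, hagree⟩ := exists_admissible_highAgree σ le_rfl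
  have hk : ∀ j, (j = 0 ∨ n < j) → k j = 0 := fun j hj => hzero j (by omega)
  have hdc : dcoset n (cycProd n k) = dcoset n σ :=
    dcoset_eq_dcoset_iff.2 fun p hp => hagree p (by omega)
  refine ⟨k, ⟨hk, H, hdc⟩, fun k' ⟨hk', H', hdc'⟩ => ?_⟩
  exact H'.eq_of_dcoset_eq H hk' hk (hdc'.trans hdc.symm)

/-- The assignment `[k_n, …, k_1] ↦ O_{c_{k_n,n} ⋯ c_{k_1,1}}` is a bijection from admissible
sequences of length `n` onto the set of double cosets of `S` in `S_{2n}`: every double coset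
`O_σ` arises from exactly one admissible sequence (normalized to vanish outside `1, …, n`). -/
theorem admissible_bijection_dcosets (n : ℕ) (hn : 1 ≤ n) (σ : Equiv.Perm (Fin (2 * n))) :
    ∃! k : ℕ → ℕ, (∀ j, (j = 0 ∨ n < j) → k j = 0) ∧ Admissible n k ∧
      dcoset n (cycProd n k) = dcoset n σ :=
  admissible_bijection_dcosets_general n σ
end

section
/- Let n ≥ 1, σ ∈ S_{2n} and w ∈ O_σ. Then w is the element of minimal length in O_σ if and only if m_{11}^w = m_{13}^w = m_{21}^w = m_{22}^w = m_{33}^w = 0. -/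
/-- Membership in the set `N_l^t` (`l ∈ {1,2,3,4}`): `N_1` consists of first-half points sent
to the first half, `N_2` first-half points sent to the second half, `N_3` second-half points
sent to the first half, and `N_4` second-half points sent to the second half. -/
def inN (n : ℕ) (t : Equiv.Perm (Fin (2 * n))) : ℕ → Fin (2 * n) → Prop
  | 1, i => (i : ℕ) < n ∧ (t i : ℕ) < n
  | 2, i => (i : ℕ) < n ∧ n ≤ (t i : ℕ)
  | 3, i => n ≤ (i : ℕ) ∧ (t i : ℕ) < n
  | 4, i => n ≤ (i : ℕ) ∧ n ≤ (t i : ℕ)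
  | _, _ => False

/-- The count `m_{lr}^t = #{(i,j) : i ∈ N_l^t, j ∈ N_r^t, i < j, t(j) < t(i)}`. -/
noncomputable def mcount (n : ℕ) (t : Equiv.Perm (Fin (2 * n))) (l r : ℕ) : ℕ :=
  {p : Fin (2 * n) × Fin (2 * n) |
    inN n t l p.1 ∧ inN n t r p.2 ∧ p.1 < p.2 ∧ t p.2 < t p.1}.ncard


/-!
Every inversion `(i, j)` of `w` is of one of three kinds: both positions lie in the first
half (these are counted by `m₁₁ + m₂₁ + m₂₂`), both values lie in the first half
(`m₁₁ + m₁₃ + m₃₃`), or `j` and `w i` both lie in the second half. Elements of `S` move only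
first-half points and keep them below the second half, so the inversions of the third kind
are equinumerous for all elements of `O_σ`. Hence if the five counts vanish, `w` attains the
least possible length. Conversely, if a minimal `w` were not increasing on the first half of
positions (or of values), it would have a descent at adjacent points `k, k + 1` there, and
multiplying by the transposition `(k k+1) ∈ S` would remove an inversion.
-/

open Equiv Function Order

section Inversions

variable {α : Type*} [LinearOrder α]

def Equiv.Perm.inversions (t : Perm α) : Set (α × α) := {p | p.1 < p.2 ∧ t p.2 < t p.1}

lemma CovBy.le_or_le {k k' : α} (hk : k ⋖ k') (c : α) : c ≤ k ∨ k' ≤ c :=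
  (le_or_gt k' c).symm.imp hk.le_of_lt id

lemma swap_lt_swap_of_covBy {k k' a b : α} (hk : k ⋖ k') (hab : a < b)
    (hne : ¬(a = k ∧ b = k')) : swap k k' a < swap k k' b := by
  have := hk.lt
  rw [swap_apply_def, swap_apply_def]
  rcases hk.le_or_le a with ha | ha <;> rcases hk.le_or_le b with hb | hb <;>
    split_ifs <;> subst_vars <;> first | order | simp at hne

lemma ncard_inversions_mul_swap_lt [Finite α] {t : Perm α} {k k' : α} (hk : k ⋖ k')
    (ht : t k' < t k) : (t * swap k k').inversions.ncard < t.inversions.ncard := by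
  set s := swap k k'
  have hsub : Prod.map s s '' (t * s).inversions ⊆ t.inversions := by
    rintro _ ⟨⟨a, b⟩, ⟨hab, hinv⟩, rfl⟩
    refine ⟨swap_lt_swap_of_covBy hk hab ?_, hinv⟩
    rintro ⟨rfl, rfl⟩
    simp only [Perm.mul_apply, s, swap_apply_left, swap_apply_right] at hinv
    exact lt_asymm ht hinv
  have hkk' : (k, k') ∉ Prod.map s s '' (t * s).inversions := by
    rintro ⟨⟨a, b⟩, ⟨hab, -⟩, he⟩
    simp only [Prod.map, Prod.mk.injEq, s, swap_apply_eq_iff, swap_apply_left,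
      swap_apply_right] at he
    rw [he.1, he.2] at hab
    exact lt_asymm hk.lt hab
  calc (t * s).inversions.ncard = (Prod.map s s '' (t * s).inversions).ncard :=
        (Set.ncard_image_of_injective _ (s.injective.prodMap s.injective)).symm
    _ < t.inversions.ncard :=
        Set.ncard_lt_ncard ((Set.ssubset_iff_of_subset hsub).2 ⟨(k, k'), ⟨hk.lt, ht⟩, hkk'⟩)

lemma ncard_inversions_inv [Finite α] (t : Perm α) :
    t⁻¹.inversions.ncard = t.inversions.ncard := by
  have : t⁻¹.inversions = (fun p => (t p.2, t p.1)) '' t.inversions := by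
    ext ⟨x, y⟩
    constructor
    · rintro ⟨hxy, hinv⟩
      exact ⟨(t⁻¹ y, t⁻¹ x), ⟨hinv, by simpa using hxy⟩, by simp⟩
    · rintro ⟨⟨a, b⟩, ⟨hab, hinv⟩, he⟩
      simp only [Prod.mk.injEq] at he
      obtain ⟨rfl, rfl⟩ := he
      exact ⟨hinv, by simpa using hab⟩
  rw [this, Set.ncard_image_of_injective]
  intro p q h
  simp only [Prod.mk.injEq, EmbeddingLike.apply_eq_iff_eq] at h
  exact Prod.ext h.2 h.1

lemma exists_covBy_descent_of_not_strictMonoOn [SuccOrder α] [IsSuccArchimedean α]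
    {β : Type*} [LinearOrder β] {f : α → β} (hf : Injective f) {s : Set α}
    (hs : s.OrdConnected) (h : ¬StrictMonoOn f s) :
    ∃ a ∈ s, ∃ b ∈ s, a ⋖ b ∧ f b < f a := by
  contrapose! h
  refine strictMonoOn_of_lt_succ hs fun a ha has hsa => ?_
  have hcov := covBy_succ_of_not_isMax ha
  exact lt_of_le_of_ne (h a has _ hsa hcov) (hf.ne hcov.ne)

end Inversions

section DoubleCoset

variable {n : ℕ}

lemma len_eq_ncard_inversions (t : Perm (Fin (2 * n))) : len n t = t.inversions.ncard := rfl

def firstHalf (n : ℕ) : Set (Fin (2 * n)) := {i | (i : ℕ) < n}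

lemma ordConnected_firstHalf : (firstHalf n).OrdConnected :=
  ⟨fun _ _ _ hy _ hz => lt_of_le_of_lt (Fin.le_def.1 hz.2) hy⟩

lemma swap_mem_Sfix {a b : Fin (2 * n)} (ha : a ∈ firstHalf n) (hb : b ∈ firstHalf n) :
    swap a b ∈ Sfix n := fun i hi =>
  swap_apply_of_ne_of_ne (by rintro rfl; exact absurd ha (not_lt.2 hi))
    (by rintro rfl; exact absurd hb (not_lt.2 hi))

lemma mul_mem_Sfix {g h : Perm (Fin (2 * n))} (hg : g ∈ Sfix n) (hh : h ∈ Sfix n) :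
    g * h ∈ Sfix n := fun i hi => by rw [Perm.mul_apply, hh i hi, hg i hi]

lemma inv_mem_Sfix {g : Perm (Fin (2 * n))} (hg : g ∈ Sfix n) : g⁻¹ ∈ Sfix n := fun i hi =>
  (Perm.inv_eq_iff_eq).2 (hg i hi).symm

lemma apply_lt_iff_of_mem_Sfix {g : Perm (Fin (2 * n))} (hg : g ∈ Sfix n) (x : Fin (2 * n)) :
    (g x : ℕ) < n ↔ (x : ℕ) < n := by
  constructor
  · intro h
    by_contra hx
    rw [hg x (not_lt.1 hx)] at h
    exact hx h
  · intro hx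
    by_contra h
    have : g x = x := g.injective (hg (g x) (not_lt.1 h))
    rw [this] at h
    exact h hx

lemma le_apply_iff_of_mem_Sfix {g : Perm (Fin (2 * n))} (hg : g ∈ Sfix n) (x : Fin (2 * n)) :
    n ≤ (g x : ℕ) ↔ n ≤ (x : ℕ) := by
  simp only [← not_lt, apply_lt_iff_of_mem_Sfix hg]

lemma apply_lt_apply_iff_of_mem_Sfix {g : Perm (Fin (2 * n))} (hg : g ∈ Sfix n)
    {x y : Fin (2 * n)} (hy : n ≤ (y : ℕ)) : g x < g y ↔ x < y := by
  rw [hg y hy, Fin.lt_def, Fin.lt_def]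
  by_cases hx : (x : ℕ) < n
  · have := (apply_lt_iff_of_mem_Sfix hg x).2 hx
    omega
  · rw [hg x (not_lt.1 hx)]

lemma mul_mem_dcoset {σ t h : Perm (Fin (2 * n))} (ht : t ∈ dcoset n σ) (hh : h ∈ Sfix n) :
    t * h ∈ dcoset n σ := by
  obtain ⟨g, hg, h', hh', rfl⟩ := ht
  exact ⟨g, hg, h' * h, mul_mem_Sfix hh' hh, by simp only [mul_assoc]⟩

lemma inv_mem_dcoset {σ t : Perm (Fin (2 * n))} (ht : t ∈ dcoset n σ) :
    t⁻¹ ∈ dcoset n σ⁻¹ := by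
  obtain ⟨g, hg, h, hh, rfl⟩ := ht
  exact ⟨h⁻¹, inv_mem_Sfix hh, g⁻¹, inv_mem_Sfix hg, by simp only [mul_inv_rev, mul_assoc]⟩

end DoubleCoset

section TailInversions

variable {n : ℕ}

def tailInversions (n : ℕ) (t : Perm (Fin (2 * n))) : Set (Fin (2 * n) × Fin (2 * n)) :=
  {p ∈ t.inversions | n ≤ (p.2 : ℕ) ∧ n ≤ (t p.1 : ℕ)}

lemma tailInversions_subset (t : Perm (Fin (2 * n))) : tailInversions n t ⊆ t.inversions :=
  fun _ hp => hp.1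

lemma tailInversions_mul_left {g : Perm (Fin (2 * n))} (hg : g ∈ Sfix n)
    (t : Perm (Fin (2 * n))) : tailInversions n (g * t) = tailInversions n t := by
  ext ⟨i, j⟩
  simp only [tailInversions, Perm.inversions, Set.mem_ofPred_eq, Perm.mul_apply]
  constructor
  · rintro ⟨⟨hij, hinv⟩, hj, hti⟩
    have hti' := (le_apply_iff_of_mem_Sfix hg _).1 hti
    exact ⟨⟨hij, (apply_lt_apply_iff_of_mem_Sfix hg hti').1 hinv⟩, hj, hti'⟩
  · rintro ⟨⟨hij, hinv⟩, hj, hti⟩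
    exact ⟨⟨hij, (apply_lt_apply_iff_of_mem_Sfix hg hti).2 hinv⟩, hj,
      (le_apply_iff_of_mem_Sfix hg _).2 hti⟩

lemma tailInversions_mul_right (t : Perm (Fin (2 * n))) {h : Perm (Fin (2 * n))}
    (hh : h ∈ Sfix n) : tailInversions n (t * h) = Prod.map h h ⁻¹' tailInversions n t := by
  ext ⟨i, j⟩
  simp only [tailInversions, Perm.inversions, Set.mem_ofPred_eq, Set.mem_preimage,
    Prod.map, Perm.mul_apply]
  constructor
  · rintro ⟨⟨hij, hinv⟩, hj, hti⟩
    exact ⟨⟨(apply_lt_apply_iff_of_mem_Sfix hh hj).2 hij, hinv⟩,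
      (le_apply_iff_of_mem_Sfix hh _).2 hj, hti⟩
  · rintro ⟨⟨hij, hinv⟩, hj, hti⟩
    have hj' := (le_apply_iff_of_mem_Sfix hh _).1 hj
    exact ⟨⟨(apply_lt_apply_iff_of_mem_Sfix hh hj').1 hij, hinv⟩, hj', hti⟩

lemma ncard_tailInversions_of_mem_dcoset {σ t : Perm (Fin (2 * n))} (ht : t ∈ dcoset n σ) :
    (tailInversions n t).ncard = (tailInversions n σ).ncard := by
  obtain ⟨g, hg, h, hh, rfl⟩ := ht
  rw [tailInversions_mul_right _ hh, Set.ncard_preimage_of_injective_subset_range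
    (h.injective.prodMap h.injective) (by simp [Set.range_prodMap]), tailInversions_mul_left hg]

end TailInversions

section Minimal

variable {n : ℕ} {σ w : Perm (Fin (2 * n))}

lemma strictMonoOn_firstHalf_of_minimal (hw : w ∈ dcoset n σ)
    (hmin : ∀ t ∈ dcoset n σ, len n w ≤ len n t) : StrictMonoOn w (firstHalf n) := by
  by_contra hmono
  obtain ⟨a, ha, b, hb, hab, hdesc⟩ :=
    exists_covBy_descent_of_not_strictMonoOn w.injective ordConnected_firstHalf hmono
  exact (hmin _ (mul_mem_dcoset hw (swap_mem_Sfix ha hb))).not_gt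
    (ncard_inversions_mul_swap_lt hab hdesc)

lemma strictMonoOn_inv_firstHalf_of_minimal (hw : w ∈ dcoset n σ)
    (hmin : ∀ t ∈ dcoset n σ, len n w ≤ len n t) : StrictMonoOn ⇑w⁻¹ (firstHalf n) := by
  refine strictMonoOn_firstHalf_of_minimal (inv_mem_dcoset hw) fun t ht => ?_
  simpa only [len_eq_ncard_inversions, ncard_inversions_inv, inv_inv] using
    hmin t⁻¹ (by simpa only [inv_inv] using inv_mem_dcoset ht)

end Minimal

section Counts

variable {n : ℕ} {w : Perm (Fin (2 * n))}

lemma mcount_eq_zero_iff {l r : ℕ} : mcount n w l r = 0 ↔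
    ∀ i j, inN n w l i → inN n w r j → i < j → w i ≤ w j := by
  simp only [mcount, Set.ncard_eq_zero (Set.toFinite _), Set.eq_empty_iff_forall_notMem,
    Set.mem_ofPred_eq, Prod.forall, not_and, not_lt]

lemma strictMonoOn_firstHalf_iff : StrictMonoOn w (firstHalf n) ↔
    mcount n w 1 1 = 0 ∧ mcount n w 2 1 = 0 ∧ mcount n w 2 2 = 0 := by
  simp only [mcount_eq_zero_iff, inN]
  constructor
  · intro h
    refine ⟨?_, ?_, ?_⟩ <;> exact fun i j _ hj hij =>
      (h (Nat.lt_trans (Fin.lt_def.1 hij) hj.1) hj.1 hij).le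
  · rintro ⟨h11, h21, h22⟩ i hi j hj hij
    refine lt_of_le_of_ne ?_ (w.injective.ne hij.ne)
    rcases lt_or_ge (w i : ℕ) n with hwi | hwi <;> rcases lt_or_ge (w j : ℕ) n with hwj | hwj
    · exact h11 i j ⟨hi, hwi⟩ ⟨hj, hwj⟩ hij
    · exact Fin.le_def.2 (by omega)
    · exact h21 i j ⟨hi, hwi⟩ ⟨hj, hwj⟩ hij
    · exact h22 i j ⟨hi, hwi⟩ ⟨hj, hwj⟩ hij

lemma strictMonoOn_inv_firstHalf_iff : StrictMonoOn ⇑w⁻¹ (firstHalf n) ↔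
    mcount n w 1 1 = 0 ∧ mcount n w 1 3 = 0 ∧ mcount n w 3 3 = 0 := by
  simp only [mcount_eq_zero_iff, inN]
  constructor
  · intro h
    refine ⟨?_, ?_, ?_⟩ <;> exact fun i j hi hj hij =>
      le_of_not_gt fun hlt => hij.not_gt (by simpa using h hj.2 hi.2 hlt)
  · rintro ⟨h11, h13, h33⟩ x hx y hy hxy
    obtain ⟨i, rfl⟩ := w.surjective x
    obtain ⟨j, rfl⟩ := w.surjective y
    simp only [Perm.coe_inv, symm_apply_apply]
    refine lt_of_not_ge fun hji => hxy.not_ge ?_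
    replace hji : j < i := lt_of_le_of_ne hji (by rintro rfl; exact hxy.ne rfl)
    rcases lt_or_ge (j : ℕ) n with hj | hj <;> rcases lt_or_ge (i : ℕ) n with hi | hi
    · exact h11 j i ⟨hj, hy⟩ ⟨hi, hx⟩ hji
    · exact h13 j i ⟨hj, hy⟩ ⟨hi, hx⟩ hji
    · exact absurd (Fin.lt_def.1 hji) (by omega)
    · exact h33 j i ⟨hj, hy⟩ ⟨hi, hx⟩ hji

lemma inversions_subset_tailInversions (h₁ : StrictMonoOn w (firstHalf n))
    (h₂ : StrictMonoOn ⇑w⁻¹ (firstHalf n)) : w.inversions ⊆ tailInversions n w := by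
  rintro ⟨i, j⟩ ⟨hij, hinv⟩
  refine ⟨⟨hij, hinv⟩, le_of_not_gt fun hj => ?_, le_of_not_gt fun hwi => ?_⟩
  · exact hinv.not_gt (h₁ (Nat.lt_trans (Fin.lt_def.1 hij) hj) hj hij)
  · have hwj : (w j : ℕ) < n := Nat.lt_trans (Fin.lt_def.1 hinv) hwi
    exact hij.not_gt (by simpa using h₂ hwj hwi hinv)

lemma mcounts_eq_zero_iff : (mcount n w 1 1 = 0 ∧ mcount n w 1 3 = 0 ∧ mcount n w 2 1 = 0 ∧
      mcount n w 2 2 = 0 ∧ mcount n w 3 3 = 0) ↔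
      StrictMonoOn w (firstHalf n) ∧ StrictMonoOn ⇑w⁻¹ (firstHalf n) := by
  rw [strictMonoOn_firstHalf_iff, strictMonoOn_inv_firstHalf_iff]
  tauto

end Counts

theorem minimal_iff_mcounts_vanish_general (n : ℕ) (σ w : Equiv.Perm (Fin (2 * n)))
    (hw : w ∈ dcoset n σ) :
    (∀ t ∈ dcoset n σ, len n w ≤ len n t) ↔
      (mcount n w 1 1 = 0 ∧ mcount n w 1 3 = 0 ∧ mcount n w 2 1 = 0 ∧
        mcount n w 2 2 = 0 ∧ mcount n w 3 3 = 0) := by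
  rw [mcounts_eq_zero_iff]
  constructor
  · intro hmin
    exact ⟨strictMonoOn_firstHalf_of_minimal hw hmin,
      strictMonoOn_inv_firstHalf_of_minimal hw hmin⟩
  · rintro ⟨h₁, h₂⟩ t ht
    calc len n w = (tailInversions n w).ncard := by
          rw [len_eq_ncard_inversions, (tailInversions_subset w).antisymm
            (inversions_subset_tailInversions h₁ h₂)]
      _ = (tailInversions n t).ncard := by
          rw [ncard_tailInversions_of_mem_dcoset hw, ncard_tailInversions_of_mem_dcoset ht]
      _ ≤ len n t := Set.ncard_le_ncard (tailInversions_subset t) (Set.toFinite _)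

/-- An element `w ∈ O_σ` is the minimal-length element of `O_σ` if and only if
`m_{11}^w = m_{13}^w = m_{21}^w = m_{22}^w = m_{33}^w = 0`. -/
theorem minimal_iff_mcounts_vanish (n : ℕ) (hn : 1 ≤ n) (σ w : Equiv.Perm (Fin (2 * n)))
    (hw : w ∈ dcoset n σ) :
    (∀ t ∈ dcoset n σ, len n w ≤ len n t) ↔
      (mcount n w 1 1 = 0 ∧ mcount n w 1 3 = 0 ∧ mcount n w 2 1 = 0 ∧
        mcount n w 2 2 = 0 ∧ mcount n w 3 3 = 0) :=
  minimal_iff_mcounts_vanish_general n σ w hw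
end
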